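/- arXiv:2411.12857 — 2 statements merged into one kernel-verified Lean document; each statement's English description precedes it below -/
import Mathlib

section
/- Program capture extends to conjunctions: if abstraction A captures the concrete program f, then for any abstraction B, the conjunction A * B captures f. -/
namespace HC

open Classical

universe u v w

/-- A heap: a finite partial map from addresses `L` to values `V`. -/
structure Heap (L : Type u) (V : Type v) where
  toFun : L → Option V
  fin : {l | toFun l ≠ none}.Finite

variable {L : Type u} {V : Type v}

/-- Domain of a heap. -/
def Heap.dom (h : Heap L V) : Set L := {l | h.toFun l ≠ none}

/-- Disjointness of heaps. -/
def HDisj (h₁ h₂ : Heap L V) : Prop := Disjoint h₁.dom h₂.dom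

/-- Union of heaps (left-biased; used on disjoint heaps). -/
def hunion (h₁ h₂ : Heap L V) : Heap L V where
  toFun l := (h₁.toFun l).elim (h₂.toFun l) some
  fin := by
    apply (h₁.fin.union h₂.fin).subset
    intro l hl
    simp only [Set.mem_setOf_eq] at hl
    rcases hh : h₁.toFun l with _ | v
    · right; simpa [Heap.dom, hh, Option.elim] using hl
    · left; simp [Heap.dom, hh]

/-- `subheap h₁ h₂`: `h₁` is a subheap of `h₂`. -/
def subheap (h₁ h₂ : Heap L V) : Prop := ∃ k, HDisj h₁ k ∧ hunion h₁ k = h₂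

/-- `hsub k h'` : the subheap of `k` with domain `dom k \ dom h'`. -/
def hsub (k h' : Heap L V) : Heap L V where
  toFun l := (h'.toFun l).elim (k.toFun l) (fun _ => none)
  fin := by
    apply k.fin.subset
    intro l hl
    simp only [Set.mem_setOf_eq] at hl ⊢
    rcases hh : h'.toFun l with _ | v
    · simpa [hh, Option.elim] using hl
    · simp [hh, Option.elim] at hl

/-- Extension `Ψ⁺` of a heap predicate: some subheap satisfies `Ψ`. -/
def extPred (Ψ : Heap L V → Prop) (h : Heap L V) : Prop := ∃ h', subheap h' h ∧ Ψ h'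

/-! ### Concrete programs -/

/-- Sufficient heaps of a program. -/
def suff (f : Heap L V → Set (Heap L V)) : Set (Heap L V) := {h | f h ≠ ∅}

/-- Footprint of a program. -/
def foot (f : Heap L V → Set (Heap L V)) : Set (Heap L V) :=
  suff f ∪ {h | ∀ h', HDisj h h' → hunion h h' ∉ suff f}

/-- Local action: a concrete program is a total function `f : H → 𝒫(H)` acting locally. -/
def LocalAction (f : Heap L V → Set (Heap L V)) : Prop :=
  ∀ h, f h ≠ ∅ → ∀ h', HDisj h h' →
    f (hunion h h') ≠ ∅ ∧ ∀ k ∈ f (hunion h h'), subheap h' k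

/-- The concrete transformer `f̄`. -/
noncomputable def tbar (f : Heap L V → Set (Heap L V)) (C : Set (Heap L V)) :
    Set (Heap L V) :=
  if C ⊆ suff f then ⋃ h ∈ C, f h else ∅

/-- Sequencing `f;g ≜ ḡ ∘ f`. -/
noncomputable def pseq (f g : Heap L V → Set (Heap L V)) : Heap L V → Set (Heap L V) :=
  fun h => tbar g (f h)

/-! ### Abstractions and the abstract domain -/

/-- An abstraction is given by its projection `π : H → X + {✗}`, encoded with `Option`
(`none` is `✗`). -/
def Locality (π : Heap L V → Option X) : Prop :=
  ∀ h h', HDisj h h' → (π h).isSome → π (hunion h h') = π h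

/-- The purview of an abstraction. -/
def purv (π : Heap L V → Option X) : Set (Heap L V) := {h | (π h).isSome}

/-- The abstract domain `𝒜 = X + {⊥, ✗, ✓, ⊤}`. -/
inductive AbsDom (X : Type w) where
  | bot | cross | check | top
  | val (x : X)

/-- The partial order on the abstract domain. -/
def ale {X : Type w} : AbsDom X → AbsDom X → Prop
  | .bot, _ => True
  | _, .top => True
  | .cross, .cross => True
  | .check, .check => True
  | .val _, .check => True
  | .val x, .val y => x = y
  | _, _ => False

/-- The projection of a single heap, viewed in the abstract domain. -/
def liftProj (π : Heap L V → Option X) (h : Heap L V) : AbsDom X :=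
  (π h).elim .cross .val

/-- Abstraction function `α(C) = ⨆_{h ∈ C} π(h)` (the join computed explicitly). -/
noncomputable def alpha (π : Heap L V → Option X) (C : Set (Heap L V)) : AbsDom X :=
  if C = ∅ then .bot
  else if hx : ∃ x, ∀ h ∈ C, π h = some x then .val hx.choose
  else if ∀ h ∈ C, (π h).isSome then .check
  else if ∀ h ∈ C, π h = none then .cross
  else .top

/-- Concretization function `γ(x) = {h | π(h) ≤ x}`. -/
def gamma (π : Heap L V → Option X) (x : AbsDom X) : Set (Heap L V) :=
  {h | ale (liftProj π h) x}

/-! ### Observational equivalence and concrete commutativity -/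

/-- `[Ψ, ∼]` is an observational equivalence: `∼` is an equivalence relation on `H(Ψ⁺)`. -/
def IsObsEq (Ψ : Heap L V → Prop) (sim : Heap L V → Heap L V → Prop) : Prop :=
  (∀ h, extPred Ψ h → sim h h) ∧
  (∀ h h', extPred Ψ h → extPred Ψ h' → sim h h' → sim h' h) ∧
  (∀ a b c, extPred Ψ a → extPred Ψ b → extPred Ψ c → sim a b → sim b c → sim a c)

/-- Concrete commutativity of `f` and `g` under precondition `P` w.r.t. `[Ψ, ∼]`. -/
def CommuteUnder (Ψ : Heap L V → Prop) (sim : Heap L V → Heap L V → Prop)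
    (f g : Heap L V → Set (Heap L V)) (P : Heap L V → Prop) : Prop :=
  ∀ h, P h → pseq f g h ≠ ∅ ∧ pseq g f h ≠ ∅ ∧
    ∃ h', extPred Ψ h' ∧
      ∀ k, (k ∈ pseq f g h ∨ k ∈ pseq g f h) → extPred Ψ k ∧ sim k h'

/-- The equivalence relation `∼_A` induced by an abstraction. -/
def simInd (π : Heap L V → Option X) (h h' : Heap L V) : Prop := π h = π h'

/-- The heap predicate "h is in purview", used in the induced observational equivalence. -/
def purvPred (π : Heap L V → Option X) (h : Heap L V) : Prop := (π h).isSome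

/-- An abstraction captures an observational equivalence. -/
def CapturesEq (π : Heap L V → Option X) (Ψ : Heap L V → Prop)
    (sim : Heap L V → Heap L V → Prop) : Prop :=
  (∀ h, extPred Ψ h → (π h).isSome) ∧
  (∀ h h', Ψ h → Ψ h' → (π h).isSome → π h = π h' → sim h h')

/-! ### Abstract programs and soundness -/

/-- The abstract transformer `m̂` of an abstract program `m : X → 𝒜`. -/
def mhat {X : Type w} (m : X → AbsDom X) : AbsDom X → AbsDom X
  | .bot => .bot
  | .val x => m x
  | _ => .top

/-- `m` soundly abstracts `f` in the abstraction with projection `π`. -/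
def Sound (π : Heap L V → Option X) (m : X → AbsDom X)
    (f : Heap L V → Set (Heap L V)) : Prop :=
  (∀ (C : Set (Heap L V)) (x : AbsDom X),
      ale (alpha π C) x → ale (alpha π (tbar f C)) (mhat m x)) ∧
  (∀ C : Set (Heap L V), (∃ x, alpha π C = .val x) → alpha π (tbar f C) = .bot →
      mhat m (alpha π C) = .bot)

/-- Abstract programs `m` and `n` commute under `Q`. -/
def AbsCommute {X : Type w} (m n : X → AbsDom X) (Q : X → Prop) : Prop :=
  ∀ x, Q x → mhat n (m x) = mhat m (n x) ∧ ∃ y, mhat n (m x) = .val y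

/-- An abstraction captures a concrete program. -/
def CapturesProg (π : Heap L V → Option X) (f : Heap L V → Set (Heap L V)) : Prop :=
  (purv π ⊆ foot f) ∧
  (∀ h ∈ purv π ∩ suff f, ∃ x, alpha π (f h) = .val x) ∧
  (∀ h ∈ purv π ∩ foot f, ∀ h', HDisj h h' →
      alpha π ((fun k => hsub k h') '' f (hunion h h')) = alpha π (f h))

/-! ### Conjunction of abstractions and of abstract programs -/

/-- Projection of the conjunction `A * B`. -/
noncomputable def conjProj (πA : Heap L V → Option X) (πB : Heap L V → Option Y) :
    Heap L V → Option (X × Y) := fun h =>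
  if hc : ∃ p : Heap L V × Heap L V,
      HDisj p.1 p.2 ∧ hunion p.1 p.2 = h ∧ (πA p.1).isSome ∧ (πB p.2).isSome
    then some ((πA hc.choose.1).get hc.choose_spec.2.2.1,
               (πB hc.choose.2).get hc.choose_spec.2.2.2)
    else none

/-- Forget the specific abstract value (used for the join in a compound domain). -/
def toFour {X : Type w} {Z : Type*} : AbsDom X → AbsDom Z
  | .bot => .bot
  | .cross => .cross
  | .top => .top
  | _ => .check

/-- Join in the abstract domain (on the elements arising in program conjunction). -/
def djoin {Z : Type*} : AbsDom Z → AbsDom Z → AbsDom Z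
  | .bot, b => b
  | a, .bot => a
  | .cross, .cross => .cross
  | .check, .check => .check
  | .check, .val _ => .check
  | .val _, .check => .check
  | .val x, .val _ => .val x
  | _, _ => .top

/-- Conjunction `m * n` of abstract programs. -/
def conjProg {X Y : Type*} (m : X → AbsDom X) (n : Y → AbsDom Y) :
    X × Y → AbsDom (X × Y) := fun p =>
  match m p.1, n p.2 with
  | .bot, _ => .bot
  | _, .bot => .bot
  | .val a, .val b => .val (a, b)
  | ma, nb => djoin (toFour ma) (toFour nb)

/-! ### Isomorphism of abstractions -/

/-- `φ` induces an isomorphism between the abstractions with projections `πA`, `πB`. -/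
def Iso (πA : Heap L V → Option X) (πB : Heap L V → Option Y) (φ : X ≃ Y) : Prop :=
  ∀ h, (πA h).map φ = πB h

/-- Extension of `φ : X → Y` to the abstract domains, fixing `⊥, ✗, ✓, ⊤`. -/
def mapAbs {X Y : Type*} (φ : X → Y) : AbsDom X → AbsDom Y
  | .bot => .bot
  | .cross => .cross
  | .check => .check
  | .top => .top
  | .val x => .val (φ x)

end HC

open HC

section Aux

variable {L : Type} {V : Type} {X Y : Type}

theorem Heap.ext' {h₁ h₂ : Heap L V} (H : ∀ l, h₁.toFun l = h₂.toFun l) : h₁ = h₂ := by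
  cases h₁; cases h₂
  simp only [HC.Heap.mk.injEq]
  exact funext H

theorem hdisj_iff {h₁ h₂ : Heap L V} :
    HDisj h₁ h₂ ↔ ∀ l, h₁.toFun l = none ∨ h₂.toFun l = none := by
  unfold HDisj Heap.dom
  rw [Set.disjoint_left]
  constructor
  · intro H l
    by_cases h : h₁.toFun l = none
    · exact Or.inl h
    · right; by_contra hn; exact H h hn
  · intro H l h1 h2
    rcases H l with h | h
    · exact h1 h
    · exact h2 h

theorem hdisj_symm {h₁ h₂ : Heap L V} (H : HDisj h₁ h₂) : HDisj h₂ h₁ := by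
  rw [hdisj_iff] at H ⊢; intro l; exact (H l).symm

theorem hunion_comm {h₁ h₂ : Heap L V} (H : HDisj h₁ h₂) : hunion h₁ h₂ = hunion h₂ h₁ := by
  rw [hdisj_iff] at H
  apply Heap.ext'
  intro l
  rcases H l with h | h
  · rcases h' : h₂.toFun l with _ | v <;> simp [hunion, h, h']
  · rcases h' : h₁.toFun l with _ | v <;> simp [hunion, h, h']

theorem hunion_assoc (a b c : Heap L V) :
    hunion (hunion a b) c = hunion a (hunion b c) := by
  apply Heap.ext'
  intro l
  rcases h : a.toFun l with _ | v <;> simp [hunion, h]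

theorem hdisj_union_right {a b c : Heap L V} :
    HDisj a (hunion b c) ↔ HDisj a b ∧ HDisj a c := by
  simp only [hdisj_iff]
  constructor
  · intro H
    constructor <;> intro l <;> rcases H l with h | h
    · exact Or.inl h
    · rcases hb : b.toFun l with _ | v
      · exact Or.inr rfl
      · simp [hunion, hb] at h
    · exact Or.inl h
    · rcases hb : b.toFun l with _ | v
      · simp [hunion, hb] at h; exact Or.inr h
      · simp [hunion, hb] at h
  · rintro ⟨H1, H2⟩ l
    rcases H1 l with h | h
    · exact Or.inl h
    · rcases H2 l with h' | h'
      · exact Or.inl h'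
      · right; simp [hunion, h, h']

theorem hdisj_union_left {a b c : Heap L V} :
    HDisj (hunion a b) c ↔ HDisj a c ∧ HDisj b c := by
  constructor
  · intro H
    have := hdisj_union_right.mp (hdisj_symm H)
    exact ⟨hdisj_symm this.1, hdisj_symm this.2⟩
  · rintro ⟨H1, H2⟩
    exact hdisj_symm (hdisj_union_right.mpr ⟨hdisj_symm H1, hdisj_symm H2⟩)

theorem hsub_hunion {h₂ j : Heap L V} (H : HDisj h₂ j) : hsub (hunion h₂ j) h₂ = j := by
  rw [hdisj_iff] at H
  apply Heap.ext'
  intro l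
  rcases h : h₂.toFun l with _ | v
  · simp [hsub, hunion, h]
  · rcases H l with h' | h'
    · simp [h] at h'
    · simp [hsub, hunion, h, h'.symm]

theorem subheap_decomp {h₂ k : Heap L V} (H : subheap h₂ k) :
    HDisj (hsub k h₂) h₂ ∧ hunion (hsub k h₂) h₂ = k := by
  obtain ⟨j, hd, hu⟩ := H
  have h1 : hsub k h₂ = j := by rw [← hu]; exact hsub_hunion hd
  rw [h1, ← hu, hunion_comm hd]
  exact ⟨hdisj_symm hd, rfl⟩

theorem hdisj_hsub_union {k h₂ h' : Heap L V} :
    HDisj (hsub k (hunion h₂ h')) h₂ := by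
  rw [hdisj_iff]
  intro l
  rcases h : h₂.toFun l with _ | v
  · exact Or.inr rfl
  · left; simp [hsub, hunion, h]

theorem hsub_union_split {k h₂ h' : Heap L V} (Hd : HDisj h₂ h')
    (Hs : subheap (hunion h₂ h') k) :
    hsub k h' = hunion (hsub k (hunion h₂ h')) h₂ := by
  obtain ⟨j, hdj, huj⟩ := Hs
  rw [hdisj_iff] at Hd
  apply Heap.ext'
  intro l
  rcases hh' : h'.toFun l with _ | v
  · rcases hh2 : h₂.toFun l with _ | w
    · -- both none
      simp [hsub, hunion, hh', hh2]
      rcases hk : k.toFun l with _ | z <;> simp [hk]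
    · -- h₂ some, h' none: LHS = k l = some w
      have hk : k.toFun l = some w := by
        rw [← huj]; simp [hunion, hh2]
      simp [hsub, hunion, hh', hh2, hk]
  · -- h' some: h₂ none
    rcases Hd l with h | h
    · simp [hsub, hunion, hh', h]
    · simp [hh'] at h

theorem alpha_empty (π : Heap L V → Option X) : alpha π (∅ : Set (Heap L V)) = .bot := by
  simp [alpha]

theorem alpha_const {π : Heap L V → Option X} {C : Set (Heap L V)} {z : X}
    (hne : C ≠ ∅) (H : ∀ h ∈ C, π h = some z) : alpha π C = .val z := by
  have hx : ∃ x, ∀ h ∈ C, π h = some x := ⟨z, H⟩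
  rw [alpha, if_neg hne, dif_pos hx]
  obtain ⟨h₀, h₀C⟩ := Set.nonempty_iff_ne_empty.mpr hne
  have := hx.choose_spec h₀ h₀C
  rw [H h₀ h₀C] at this
  simp at this
  rw [this]

theorem alpha_val {π : Heap L V → Option X} {C : Set (Heap L V)} {z : X}
    (H : alpha π C = .val z) : C ≠ ∅ ∧ ∀ h ∈ C, π h = some z := by
  by_cases hne : C = ∅
  · rw [alpha, if_pos hne] at H; exact absurd H (by simp)
  refine ⟨hne, ?_⟩
  by_cases hx : ∃ x, ∀ h ∈ C, π h = some x
  · rw [alpha, if_neg hne, dif_pos hx] at H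
    have : hx.choose = z := by cases H; rfl
    rw [← this]; exact hx.choose_spec
  · rw [alpha, if_neg hne, dif_neg hx] at H
    by_cases h1 : ∀ h ∈ C, (π h).isSome
    · rw [if_pos h1] at H; exact absurd H (by simp)
    · rw [if_neg h1] at H
      by_cases h2 : ∀ h ∈ C, π h = none
      · rw [if_pos h2] at H; exact absurd H (by simp)
      · rw [if_neg h2] at H; exact absurd H (by simp)

theorem conjProj_eq {πA : Heap L V → Option X} {πB : Heap L V → Option Y}
    (hA : Locality πA) (hB : Locality πB) {h₁ h₂ : Heap L V} {a : X} {b : Y}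
    (Hd : HDisj h₁ h₂) (Ha : πA h₁ = some a) (Hb : πB h₂ = some b) :
    conjProj πA πB (hunion h₁ h₂) = some (a, b) := by
  have hAh : πA (hunion h₁ h₂) = some a := by
    rw [hA h₁ h₂ Hd (by simp [Ha]), Ha]
  have hBh : πB (hunion h₁ h₂) = some b := by
    rw [hunion_comm Hd, hB h₂ h₁ (hdisj_symm Hd) (by simp [Hb]), Hb]
  have hc : ∃ p : Heap L V × Heap L V,
      HDisj p.1 p.2 ∧ hunion p.1 p.2 = hunion h₁ h₂ ∧ (πA p.1).isSome ∧ (πB p.2).isSome :=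
    ⟨(h₁, h₂), Hd, rfl, by simp [Ha], by simp [Hb]⟩
  rw [conjProj, dif_pos hc]
  obtain ⟨hcd, hcu, hca, hcb⟩ := hc.choose_spec
  have e1 : πA hc.choose.1 = some a := by
    rw [← hA hc.choose.1 hc.choose.2 hcd hca, hcu, hAh]
  have e2 : πB hc.choose.2 = some b := by
    rw [← hB hc.choose.2 hc.choose.1 (hdisj_symm hcd) hcb, ← hunion_comm hcd, hcu, hBh]
  simp [e1, e2]

theorem conjProj_isSome {πA : Heap L V → Option X} {πB : Heap L V → Option Y}
    {h : Heap L V} (H : (conjProj πA πB h).isSome) :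
    ∃ h₁ h₂, HDisj h₁ h₂ ∧ hunion h₁ h₂ = h ∧ (πA h₁).isSome ∧ (πB h₂).isSome := by
  by_cases hc : ∃ p : Heap L V × Heap L V,
      HDisj p.1 p.2 ∧ hunion p.1 p.2 = h ∧ (πA p.1).isSome ∧ (πB p.2).isSome
  · obtain ⟨⟨h₁, h₂⟩, H1, H2, H3, H4⟩ := hc
    exact ⟨h₁, h₂, H1, H2, H3, H4⟩
  · rw [conjProj, dif_neg hc] at H; simp at H

end Aux



theorem key_val {L V X Y : Type} {πA : Heap L V → Option X} {πB : Heap L V → Option Y}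
    (hA : Locality πA) (hB : Locality πB)
    {f : Heap L V → Set (Heap L V)} (hf : LocalAction f)
    (hcap : CapturesProg πA f)
    {h₁ h₂ : Heap L V} {a : X} {b : Y}
    (Hd : HDisj h₁ h₂) (Ha : πA h₁ = some a) (Hb : πB h₂ = some b)
    (Hsuf : f (hunion h₁ h₂) ≠ ∅) :
    f h₁ ≠ ∅ ∧ ∃ x, alpha πA (f h₁) = .val x ∧
      alpha (conjProj πA πB) (f (hunion h₁ h₂)) = .val (x, b) := by
  have hpA : h₁ ∈ purv πA := by simp [purv, Ha]
  have hfoot : h₁ ∈ foot f := hcap.1 hpA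
  have hsuf1 : f h₁ ≠ ∅ := by
    rcases hfoot with hs | hs
    · exact hs
    · exact absurd Hsuf (by simpa [suff] using hs h₂ Hd)
  refine ⟨hsuf1, ?_⟩
  obtain ⟨x, hx⟩ := hcap.2.1 h₁ ⟨hpA, hsuf1⟩
  have him : alpha πA ((fun k => hsub k h₂) '' f (hunion h₁ h₂)) = .val x := by
    rw [hcap.2.2 h₁ ⟨hpA, hfoot⟩ h₂ Hd, hx]
  have hmem := (alpha_val him).2
  have hloc := hf h₁ hsuf1 h₂ Hd
  refine ⟨x, hx, alpha_const Hsuf ?_⟩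
  intro k hk
  have hπsub : πA (hsub k h₂) = some x := hmem _ ⟨k, hk, rfl⟩
  obtain ⟨hdk, huk⟩ := subheap_decomp (hloc.2 k hk)
  rw [← huk]
  exact conjProj_eq hA hB hdk hπsub Hb

/-- program capture extends to conjunctions. -/
theorem capturesProg_conj {L V X Y : Type} [Countable L] [Infinite L]
    (πA : Heap L V → Option X) (πB : Heap L V → Option Y)
    (hA : Locality πA) (hB : Locality πB)
    (f : Heap L V → Set (Heap L V)) (hf : LocalAction f)
    (hcap : CapturesProg πA f) :
    CapturesProg (conjProj πA πB) f := by
  refine ⟨?_, ?_, ?_⟩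
  · -- purview included in footprint
    intro h hp
    obtain ⟨h₁, h₂, Hd, Hu, HaS, HbS⟩ := conjProj_isSome hp
    have hfoot : h₁ ∈ foot f := hcap.1 HaS
    rcases hfoot with hs | hs
    · left
      rw [← Hu]
      exact (hf h₁ hs h₂ Hd).1
    · right
      intro h' Hd'
      rw [← Hu] at Hd' ⊢
      rw [hunion_assoc]
      exact hs (hunion h₂ h')
        (hdisj_union_right.mpr ⟨Hd, (hdisj_union_left.mp Hd').1⟩)
  · -- sufficient heaps map to values
    rintro h ⟨hp, hsuf⟩
    obtain ⟨h₁, h₂, Hd, Hu, HaS, HbS⟩ := conjProj_isSome hp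
    obtain ⟨a, Ha⟩ := Option.isSome_iff_exists.mp HaS
    obtain ⟨b, Hb⟩ := Option.isSome_iff_exists.mp HbS
    have Hne : f (hunion h₁ h₂) ≠ ∅ := by rw [Hu]; exact hsuf
    obtain ⟨-, x, -, hval⟩ := key_val hA hB hf hcap Hd Ha Hb Hne
    rw [← Hu]
    exact ⟨(x, b), hval⟩
  · -- frame condition
    rintro h ⟨hp, hfoot⟩ h' Hd'
    obtain ⟨h₁, h₂, Hd, Hu, HaS, HbS⟩ := conjProj_isSome hp
    by_cases hsuf : f h = ∅
    · have hext : f (hunion h h') = ∅ := by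
        rcases hfoot with hs | hs
        · exact absurd hs (by simpa [suff] using hsuf)
        · simpa [suff] using hs h' Hd'
      rw [hext, hsuf, Set.image_empty]
    · obtain ⟨a, Ha⟩ := Option.isSome_iff_exists.mp HaS
      obtain ⟨b, Hb⟩ := Option.isSome_iff_exists.mp HbS
      have Hne : f (hunion h₁ h₂) ≠ ∅ := by rw [Hu]; exact hsuf
      obtain ⟨hsuf1, x, hx, hval⟩ := key_val hA hB hf hcap Hd Ha Hb Hne
      rw [Hu] at hval
      rw [hval]
      -- now compute the left-hand side
      have hpA : h₁ ∈ purv πA := by simp [purv, Ha]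
      obtain ⟨Hd1', Hd2'⟩ : HDisj h₁ h' ∧ HDisj h₂ h' := by
        rw [← Hu] at Hd'; exact hdisj_union_left.mp Hd'
      have Hd1u : HDisj h₁ (hunion h₂ h') := hdisj_union_right.mpr ⟨Hd, Hd1'⟩
      have hu2 : hunion h₁ (hunion h₂ h') = hunion h h' := by
        rw [← Hu, hunion_assoc]
      have him : alpha πA ((fun k => hsub k (hunion h₂ h')) '' f (hunion h h')) = .val x := by
        rw [← hu2, hcap.2.2 h₁ ⟨hpA, hcap.1 hpA⟩ (hunion h₂ h') Hd1u, hx]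
      have hmem := (alpha_val him).2
      have hloc := hf h₁ hsuf1 (hunion h₂ h') Hd1u
      rw [hu2] at hloc
      apply alpha_const
      · exact ((Set.nonempty_iff_ne_empty.mpr hloc.1).image _).ne_empty
      · rintro j ⟨k, hk, rfl⟩
        have hπsub : πA (hsub k (hunion h₂ h')) = some x := hmem _ ⟨k, hk, rfl⟩
        show conjProj πA πB (hsub k h') = some (x, b)
        rw [hsub_union_split Hd2' (hloc.2 k hk)]
        exact conjProj_eq hA hB hdisj_hsub_union hπsub Hb
end

section
/- Compound sound commutativity: suppose m and m' commute under Q in A; n and n' commute under Q' in B; m soundly abstracts f in A with A capturing f; m' soundly abstracts f' in A with A capturing f'; n soundly abstracts g in B with B capturing g; and n' soundly abstracts g' in B with B capturing g'. Then the sequences f;g and f';g' commute under P⁺ w.r.t. the equivalence [purv(A * B), ∼_{A*B}] induced by A * B, where P(h) ≡ π_{A*B}(h) = (a, b) ∈ X_A × X_B ∧ Q(a) ∧ Q'(b). -/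
open HC

/-!
Write a heap satisfying `P⁺` as `p + q` with `π_A p = a` and `π_B q = b`, the frame being
absorbed into `p` by locality of `π_A`. Since `m a` is an abstract value, soundness forces `f`
to succeed on `p`, and capture lets `f` run on `p + q` by replacing `p` with some `p'` of
abstract value `m a` while keeping `q`; symmetrically `g` replaces `q` by a heap of value
`n b`. Hence both `f;g;f';g'` and `f';g';f;g` end in heaps `p'' + q''` whose components have
values `m' (m a) = m (m' a)` and `n' (n b) = n (n' b)`, so all outcomes have one
`A * B`-projection.
-/

namespace HC

variable {L V X Y : Type*}

section HeapAlgebra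

@[ext]
theorem Heap.ext {h₁ h₂ : Heap L V} (h : h₁.toFun = h₂.toFun) : h₁ = h₂ := by
  cases h₁; cases h₂; simpa using h

theorem hdisj_iff {h₁ h₂ : Heap L V} :
    HDisj h₁ h₂ ↔ ∀ l, h₁.toFun l = none ∨ h₂.toFun l = none := by
  simp only [HDisj, Set.disjoint_left, Heap.dom, Set.mem_ofPred_eq]
  exact forall_congr' fun l => by tauto

theorem HDisj.symm {a b : Heap L V} (h : HDisj a b) : HDisj b a := Disjoint.symm h

theorem hunion_comm {a b : Heap L V} (hd : HDisj a b) : hunion a b = hunion b a := by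
  ext l : 2
  rcases hdisj_iff.mp hd l with h | h
  · cases h2 : b.toFun l <;> simp [hunion, h, h2]
  · cases h2 : a.toFun l <;> simp [hunion, h, h2]

theorem hunion_assoc (a b c : Heap L V) :
    hunion (hunion a b) c = hunion a (hunion b c) := by
  ext l : 2
  cases h1 : a.toFun l <;> cases h2 : b.toFun l <;> simp [hunion, h1, h2]

theorem hunion_right_comm {a b c : Heap L V} (hd : HDisj b c) :
    hunion (hunion a b) c = hunion (hunion a c) b := by
  rw [hunion_assoc, hunion_comm hd, ← hunion_assoc]

theorem dom_hunion (a b : Heap L V) : (hunion a b).dom = a.dom ∪ b.dom := by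
  ext l
  simp only [Heap.dom, hunion, Set.mem_ofPred_eq, Set.mem_union]
  cases a.toFun l <;> simp

theorem hdisj_hunion_left {a b c : Heap L V} :
    HDisj (hunion a b) c ↔ HDisj a c ∧ HDisj b c := by
  simp [HDisj, dom_hunion, Set.disjoint_union_left]

def hempty : Heap L V := ⟨fun _ => none, by simp⟩

theorem subheap_refl (h : Heap L V) : subheap h h := by
  refine ⟨hempty, ?_, ?_⟩
  · simp [HDisj, Heap.dom, hempty]
  · ext l : 2
    cases h2 : h.toFun l <;> simp [hunion, hempty, h2]

theorem hsub_hunion {a b : Heap L V} (hd : HDisj a b) : hsub (hunion a b) a = b := by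
  ext l : 2
  rcases hdisj_iff.mp hd l with h | h <;> cases ha : a.toFun l <;> simp_all [hsub, hunion]

end HeapAlgebra

section AbstractDomain

theorem alpha_empty (π : Heap L V → Option X) : alpha π ∅ = .bot := if_pos rfl

theorem alpha_singleton {π : Heap L V → Option X} {h : Heap L V} {x : X}
    (hx : π h = some x) : alpha π {h} = .val x := by
  have hex : ∃ x', ∀ k ∈ ({h} : Set (Heap L V)), π k = some x' := ⟨x, by simpa using hx⟩
  rw [alpha, if_neg (Set.singleton_ne_empty h), dif_pos hex]
  have := hex.choose_spec h rfl
  rw [hx, Option.some_inj] at this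
  rw [this]

theorem eq_some_of_alpha_eq_val {π : Heap L V → Option X} {C : Set (Heap L V)} {x : X}
    (h : alpha π C = .val x) : ∀ k ∈ C, π k = some x := by
  unfold alpha at h
  split_ifs at h with h₁ h₂
  cases h
  exact h₂.choose_spec

theorem tbar_of_subset {f : Heap L V → Set (Heap L V)} {C : Set (Heap L V)}
    (h : C ⊆ suff f) : tbar f C = ⋃ k ∈ C, f k := if_pos h

theorem tbar_singleton (f : Heap L V → Set (Heap L V)) (k : Heap L V) :
    tbar f {k} = f k := by
  by_cases hk : f k = ∅
  · rw [tbar, if_neg (by simpa [suff] using hk), hk]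
  · rw [tbar_of_subset (by simpa [suff] using hk), Set.biUnion_singleton]

theorem AbsCommute.exists_vals {m m' : X → AbsDom X} {Q : X → Prop} (h : AbsCommute m m' Q)
    {x : X} (hx : Q x) :
    ∃ x₁ x₁' y, m x = .val x₁ ∧ m' x = .val x₁' ∧ m' x₁ = .val y ∧ m x₁' = .val y := by
  obtain ⟨heq, y, hy⟩ := h x hx
  cases hmx : m x with
  | val x₁ =>
    rw [hmx] at heq hy
    cases hm'x : m' x with
    | val x₁' =>
      rw [hm'x] at heq
      exact ⟨x₁, x₁', y, rfl, rfl, hy, heq.symm.trans hy⟩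
    | _ => rw [hm'x] at heq; rw [heq] at hy; cases hy
  | _ => rw [hmx] at hy; cases hy

end AbstractDomain

section ProgramSpecs

/-- The total-correctness Hoare triple `[P] f [R]`. -/
def TotalHoare (P : Heap L V → Prop) (f : Heap L V → Set (Heap L V))
    (R : Heap L V → Prop) : Prop :=
  ∀ h, P h → f h ≠ ∅ ∧ ∀ k ∈ f h, R k

theorem TotalHoare.pseq {P R S : Heap L V → Prop} {f g : Heap L V → Set (Heap L V)}
    (hf : TotalHoare P f R) (hg : TotalHoare R g S) : TotalHoare P (pseq f g) S := by
  intro h hP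
  obtain ⟨hfne, hfR⟩ := hf h hP
  have hsuff : f h ⊆ suff g := fun k hk => (hg k (hfR k hk)).1
  rw [HC.pseq, tbar_of_subset hsuff]
  refine ⟨?_, fun l hl => ?_⟩
  · obtain ⟨k, hk⟩ := Set.nonempty_iff_ne_empty.mpr hfne
    obtain ⟨l, hl⟩ := Set.nonempty_iff_ne_empty.mpr (hg k (hfR k hk)).1
    exact Set.nonempty_iff_ne_empty.mp ⟨l, Set.mem_biUnion hk hl⟩
  · obtain ⟨k, hk, hl⟩ := Set.mem_iUnion₂.mp hl
    exact (hg k (hfR k hk)).2 l hl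

theorem commuteUnder_induced {π : Heap L V → Option X} {f g : Heap L V → Set (Heap L V)}
    {P : Heap L V → Prop}
    (H : ∀ h, P h → ∃ z, (pseq f g h ≠ ∅ ∧ ∀ k ∈ pseq f g h, π k = some z) ∧
      (pseq g f h ≠ ∅ ∧ ∀ k ∈ pseq g f h, π k = some z)) :
    CommuteUnder (purvPred π) (simInd π) f g P := by
  intro h hP
  obtain ⟨z, ⟨hfg_ne, hfg_z⟩, hgf_ne, hgf_z⟩ := H h hP
  have hz : ∀ k, k ∈ pseq f g h ∨ k ∈ pseq g f h → π k = some z := by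
    rintro k (hk | hk)
    exacts [hfg_z k hk, hgf_z k hk]
  have hpurv : ∀ k, π k = some z → extPred (purvPred π) k := fun k hk =>
    ⟨k, subheap_refl k, by simp [purvPred, hk]⟩
  obtain ⟨k₀, hk₀⟩ := Set.nonempty_iff_ne_empty.mpr hfg_ne
  have hz₀ := hz k₀ (Or.inl hk₀)
  refine ⟨hfg_ne, hgf_ne, k₀, hpurv k₀ hz₀, fun k hk => ⟨hpurv k (hz k hk), ?_⟩⟩
  rw [simInd, hz k hk, hz₀]

end ProgramSpecs

section SoundCapture

variable {π : Heap L V → Option X} {m : X → AbsDom X} {f : Heap L V → Set (Heap L V)}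
  {h : Heap L V} {x x' : X}

theorem Sound.ne_empty (hs : Sound π m f) (hx : π h = some x) (hm : m x = .val x') :
    f h ≠ ∅ := by
  intro hemp
  have hbot := hs.2 {h} ⟨x, alpha_singleton hx⟩ (by rw [tbar_singleton, hemp, alpha_empty])
  rw [alpha_singleton hx, mhat, hm] at hbot
  cases hbot

theorem Sound.alpha_apply (hs : Sound π m f) (hc : CapturesProg π f)
    (hx : π h = some x) (hm : m x = .val x') : alpha π (f h) = .val x' := by
  obtain ⟨x'', hx''⟩ := hc.2.1 h ⟨by simp [purv, hx], hs.ne_empty hx hm⟩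
  have hle := hs.1 {h} (.val x) (by rw [alpha_singleton hx]; rfl)
  rw [tbar_singleton, mhat, hm, hx''] at hle
  rw [hx'', show x'' = x' from hle]

/-- Frame rule: locality of `f` keeps the frame `r`, and capture condition (3) makes the
abstract value of the rest of each outcome the one soundness predicts for `f h`. -/
theorem Sound.frame (hla : LocalAction f) (hs : Sound π m f) (hc : CapturesProg π f)
    (hx : π h = some x) (hm : m x = .val x') {r : Heap L V} (hd : HDisj h r) :
    f (hunion h r) ≠ ∅ ∧
      ∀ k ∈ f (hunion h r), ∃ k₀, HDisj k₀ r ∧ hunion k₀ r = k ∧ π k₀ = some x' := by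
  have hpurv : h ∈ purv π := by simp [purv, hx]
  have hcap := hc.2.2 h ⟨hpurv, hc.1 hpurv⟩ r hd
  rw [hs.alpha_apply hc hx hm] at hcap
  obtain ⟨hne, hloc⟩ := hla h (hs.ne_empty hx hm) r hd
  refine ⟨hne, fun k hk => ?_⟩
  obtain ⟨j, hdj, rfl⟩ := hloc k hk
  refine ⟨j, hdj.symm, hunion_comm hdj.symm, ?_⟩
  rw [← hsub_hunion hdj]
  exact eq_some_of_alpha_eq_val hcap _ ⟨_, hk, rfl⟩

end SoundCapture

section Conjunction

variable {πA : Heap L V → Option X} {πB : Heap L V → Option Y}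

theorem exists_split_of_conjProj_eq_some {h : Heap L V} {a : X} {b : Y}
    (hab : conjProj πA πB h = some (a, b)) :
    ∃ p q, HDisj p q ∧ hunion p q = h ∧ πA p = some a ∧ πB q = some b := by
  unfold conjProj at hab
  split_ifs at hab with hc
  obtain ⟨hd, hu, hsa, hsb⟩ := hc.choose_spec
  simp only [Option.some.injEq, Prod.mk.injEq] at hab
  exact ⟨_, _, hd, hu, by rw [← hab.1, Option.some_get], by rw [← hab.2, Option.some_get]⟩

/-- By locality, any split of `p + q` into an `A`-part and a `B`-part gives the same
projections as the one chosen in `conjProj`. -/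
theorem conjProj_hunion (hA : Locality πA) (hB : Locality πB) {p q : Heap L V} {a : X} {b : Y}
    (hd : HDisj p q) (hpa : πA p = some a) (hqb : πB q = some b) :
    conjProj πA πB (hunion p q) = some (a, b) := by
  have hc : ∃ s : Heap L V × Heap L V, HDisj s.1 s.2 ∧ hunion s.1 s.2 = hunion p q ∧
      (πA s.1).isSome ∧ (πB s.2).isSome :=
    ⟨(p, q), hd, rfl, by simp [hpa], by simp [hqb]⟩
  rw [conjProj, dif_pos hc]
  obtain ⟨hd', hu', hsa, hsb⟩ := hc.choose_spec
  have hA' : πA hc.choose.1 = some a := by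
    rw [← hA _ _ hd' hsa, hu', hA _ _ hd (by simp [hpa]), hpa]
  have hB' : πB hc.choose.2 = some b := by
    rw [← hB _ _ hd'.symm hsb, ← hunion_comm hd', hu', hunion_comm hd,
      hB _ _ hd.symm (by simp [hqb]), hqb]
  simp only [hA', hB', Option.get_some]

theorem locality_conjProj (hA : Locality πA) (hB : Locality πB) :
    Locality (conjProj πA πB) := by
  intro h r hd hsome
  obtain ⟨⟨a, b⟩, hab⟩ := Option.isSome_iff_exists.mp hsome
  obtain ⟨p, q, hpq, rfl, hpa, hqb⟩ := exists_split_of_conjProj_eq_some hab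
  obtain ⟨hpr, hqr⟩ := hdisj_hunion_left.mp hd
  rw [hab, hunion_right_comm hqr]
  exact conjProj_hunion hA hB (hdisj_hunion_left.mpr ⟨hpq, hqr.symm⟩)
    (by rw [hA p r hpr (by simp [hpa]), hpa]) hqb

variable (hA : Locality πA) (hB : Locality πB)
  {f g : Heap L V → Set (Heap L V)} {m : X → AbsDom X} {n : Y → AbsDom Y}
  {x x' : X} {y y' : Y}
include hA hB

theorem totalHoare_conjProj_left (hf : LocalAction f) (hs : Sound πA m f)
    (hc : CapturesProg πA f) (hm : m x = .val x') :
    TotalHoare (conjProj πA πB · = some (x, y)) f (conjProj πA πB · = some (x', y)) := by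
  intro h hxy
  obtain ⟨p, q, hpq, rfl, hpx, hqy⟩ := exists_split_of_conjProj_eq_some hxy
  obtain ⟨hne, hout⟩ := hs.frame hf hc hpx hm hpq
  refine ⟨hne, fun k hk => ?_⟩
  obtain ⟨p', hp'q, rfl, hp'x⟩ := hout k hk
  exact conjProj_hunion hA hB hp'q hp'x hqy

theorem totalHoare_conjProj_right (hg : LocalAction g) (hs : Sound πB n g)
    (hc : CapturesProg πB g) (hn : n y = .val y') :
    TotalHoare (conjProj πA πB · = some (x, y)) g (conjProj πA πB · = some (x, y')) := by
  intro h hxy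
  obtain ⟨p, q, hpq, rfl, hpx, hqy⟩ := exists_split_of_conjProj_eq_some hxy
  rw [hunion_comm hpq]
  obtain ⟨hne, hout⟩ := hs.frame hg hc hqy hn hpq.symm
  refine ⟨hne, fun k hk => ?_⟩
  obtain ⟨q', hq'p, rfl, hq'y⟩ := hout k hk
  rw [hunion_comm hq'p]
  exact conjProj_hunion hA hB hq'p.symm hpx hq'y

theorem totalHoare_conjProj_pseq (hf : LocalAction f) (hs : Sound πA m f)
    (hcf : CapturesProg πA f) (hg : LocalAction g) (hsn : Sound πB n g)
    (hcg : CapturesProg πB g) (hm : m x = .val x') (hn : n y = .val y') :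
    TotalHoare (conjProj πA πB · = some (x, y)) (pseq f g)
      (conjProj πA πB · = some (x', y')) :=
  (totalHoare_conjProj_left hA hB hf hs hcf hm).pseq
    (totalHoare_conjProj_right hA hB hg hsn hcg hn)

end Conjunction

end HC

theorem compound_sound_commutativity_general {L V X Y : Type}
    (πA : Heap L V → Option X) (πB : Heap L V → Option Y)
    (hA : Locality πA) (hB : Locality πB)
    (f f' g g' : Heap L V → Set (Heap L V))
    (hf : LocalAction f) (hf' : LocalAction f')
    (hg : LocalAction g) (hg' : LocalAction g')
    (m m' : X → AbsDom X) (n n' : Y → AbsDom Y)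
    (Q : X → Prop) (Q' : Y → Prop)
    (hmm : AbsCommute m m' Q) (hnn : AbsCommute n n' Q')
    (hsm : Sound πA m f) (hcf : CapturesProg πA f)
    (hsm' : Sound πA m' f') (hcf' : CapturesProg πA f')
    (hsn : Sound πB n g) (hcg : CapturesProg πB g)
    (hsn' : Sound πB n' g') (hcg' : CapturesProg πB g') :
    CommuteUnder (purvPred (conjProj πA πB)) (simInd (conjProj πA πB))
      (pseq f g) (pseq f' g')
      (extPred (fun h => ∃ a b, conjProj πA πB h = some (a, b) ∧ Q a ∧ Q' b)) := by
  refine commuteUnder_induced fun h ⟨h₀, ⟨r, hd, hr⟩, a, b, hab, hQa, hQb⟩ => ?_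
  have hh : conjProj πA πB h = some (a, b) := by
    rw [← hr, locality_conjProj hA hB h₀ r hd (by simp [hab]), hab]
  obtain ⟨a₁, a₁', a₂, hma, hm'a, hm'a₁, hma₁'⟩ := hmm.exists_vals hQa
  obtain ⟨b₁, b₁', b₂, hnb, hn'b, hn'b₁, hnb₁'⟩ := hnn.exists_vals hQb
  refine ⟨(a₂, b₂), ?_, ?_⟩
  · exact (totalHoare_conjProj_pseq hA hB hf hsm hcf hg hsn hcg hma hnb).pseq
      (totalHoare_conjProj_pseq hA hB hf' hsm' hcf' hg' hsn' hcg' hm'a₁ hn'b₁) h hh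
  · exact (totalHoare_conjProj_pseq hA hB hf' hsm' hcf' hg' hsn' hcg' hm'a hn'b).pseq
      (totalHoare_conjProj_pseq hA hB hf hsm hcf hg hsn hcg hma₁' hnb₁') h hh

/-- compound sound commutativity. -/
theorem compound_sound_commutativity {L V X Y : Type} [Countable L] [Infinite L]
    (πA : Heap L V → Option X) (πB : Heap L V → Option Y)
    (hA : Locality πA) (hB : Locality πB)
    (f f' g g' : Heap L V → Set (Heap L V))
    (hf : LocalAction f) (hf' : LocalAction f')
    (hg : LocalAction g) (hg' : LocalAction g')
    (m m' : X → AbsDom X) (n n' : Y → AbsDom Y)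
    (Q : X → Prop) (Q' : Y → Prop)
    (hmm : AbsCommute m m' Q) (hnn : AbsCommute n n' Q')
    (hsm : Sound πA m f) (hcf : CapturesProg πA f)
    (hsm' : Sound πA m' f') (hcf' : CapturesProg πA f')
    (hsn : Sound πB n g) (hcg : CapturesProg πB g)
    (hsn' : Sound πB n' g') (hcg' : CapturesProg πB g') :
    CommuteUnder (purvPred (conjProj πA πB)) (simInd (conjProj πA πB))
      (pseq f g) (pseq f' g')
      (extPred (fun h => ∃ a b, conjProj πA πB h = some (a, b) ∧ Q a ∧ Q' b)) :=
  compound_sound_commutativity_general πA πB hA hB f f' g g' hf hf' hg hg' m m' n n' Q Q' hmm hnn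
    hsm hcf hsm' hcf' hsn hcg hsn' hcg'
end
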